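/- arXiv:2106.13808 — 8 statements merged into one kernel-verified Lean document; each statement's English description precedes it below -/
import Mathlib

section
/- If there exist a positive sequence ζₙ and a constant c > 0 such that ζₙ·(aₙ/aₙ₊₁) − ζₙ₊₁ ≥ c for all n, then the positive series ∑ aₙ converges. -/
theorem stmt_0 (a ζ : ℕ → ℝ) (ha : ∀ n, 0 < a n) (hζ : ∀ n, 0 < ζ n)
    (c : ℝ) (hc : 0 < c)
    (h : ∀ n, ζ n * (a n / a (n + 1)) - ζ (n + 1) ≥ c) :
    Summable a := by
  have key : ∀ n, c * a (n + 1) ≤ ζ n * a n - ζ (n + 1) * a (n + 1) := by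
    intro n
    have hpos := ha (n + 1)
    have := (sub_le_sub_iff_right (ζ (n + 1))).mpr (le_refl (ζ n * (a n / a (n + 1))))
    have hmul := mul_le_mul_of_nonneg_right (h n) hpos.le
    calc c * a (n + 1) ≤ (ζ n * (a n / a (n + 1)) - ζ (n + 1)) * a (n + 1) := hmul
      _ = ζ n * a n - ζ (n + 1) * a (n + 1) := by
          field_simp
  have hsum : Summable (fun n => a (n + 1)) := by
    apply summable_of_sum_range_le (c := ζ 0 * a 0 / c)
    · intro n; exact (ha (n + 1)).le
    · intro n
      have htel : ∑ i ∈ Finset.range n, (ζ i * a i - ζ (i + 1) * a (i + 1))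
          = ζ 0 * a 0 - ζ n * a n := Finset.sum_range_sub' (fun i => ζ i * a i) n
      have h1 : c * ∑ i ∈ Finset.range n, a (i + 1) ≤ ζ 0 * a 0 - ζ n * a n := by
        rw [Finset.mul_sum, ← htel]
        exact Finset.sum_le_sum fun i _ => key i
      have h2 : ζ 0 * a 0 - ζ n * a n ≤ ζ 0 * a 0 :=
        sub_le_self _ (mul_pos (hζ n) (ha n)).le
      rw [le_div_iff₀ hc, mul_comm]
      exact h1.trans h2
  exact (summable_nat_add_iff 1).mp hsum
end

section
/- If the positive series ∑ aₙ converges, then there exist a positive sequence ζₙ and a constant c > 0 such that ζₙ·(aₙ/aₙ₊₁) − ζₙ₊₁ ≥ c for all n. -/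
theorem stmt_1 (a : ℕ → ℝ) (ha : ∀ n, 0 < a n) (hsum : Summable a) :
    ∃ (ζ : ℕ → ℝ) (c : ℝ), (∀ n, 0 < ζ n) ∧ 0 < c ∧
      ∀ n, ζ n * (a n / a (n + 1)) - ζ (n + 1) ≥ c := by
  set R : ℕ → ℝ := fun n => ∑' k, a (k + (n + 1)) with hR
  have hsumR : ∀ n, Summable (fun k => a (k + (n + 1))) := fun n =>
    (summable_nat_add_iff (n + 1)).mpr hsum
  have hRpos : ∀ n, 0 < R n := fun n =>
    Summable.tsum_pos (hsumR n) (fun i => (ha _).le) 0 (ha _)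
  have hrec : ∀ n, R n = a (n + 1) + R (n + 1) := by
    intro n
    have := Summable.tsum_eq_zero_add (f := fun k => a (k + (n + 1))) (hsumR n)
    simp only [zero_add] at this
    rw [hR]
    simp only
    rw [this]
    congr 1
    apply tsum_congr
    intro k
    congr 1
    ring
  refine ⟨fun n => R n / a n, 1, fun n => div_pos (hRpos n) (ha n), one_pos, ?_⟩
  intro n
  have han : a n ≠ 0 := (ha n).ne'
  have han1 : a (n + 1) ≠ 0 := (ha (n + 1)).ne'
  have : R n / a n * (a n / a (n + 1)) - R (n + 1) / a (n + 1)
      = (R n - R (n + 1)) / a (n + 1) := by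
    field_simp
  rw [ge_iff_le, this, hrec n]
  rw [le_div_iff₀ (ha (n + 1))]
  ring_nf
  simp
end

section
/- If there exists a positive sequence ζₙ such that ζₙ·(aₙ/aₙ₊₁) − ζₙ₊₁ ≤ 0 for all n and ∑ 1/ζₙ diverges, then the positive series ∑ aₙ diverges. -/
theorem stmt_2 (a ζ : ℕ → ℝ) (ha : ∀ n, 0 < a n) (hζ : ∀ n, 0 < ζ n)
    (h : ∀ n, ζ n * (a n / a (n + 1)) - ζ (n + 1) ≤ 0)
    (hdiv : ¬ Summable (fun n => 1 / ζ n)) :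
    ¬ Summable a := by
  intro hs
  apply hdiv
  have key : ∀ n, ζ 0 * a 0 ≤ ζ n * a n := by
    intro n
    induction n with
    | zero => exact le_rfl
    | succ n ih =>
      refine ih.trans ?_
      have hn := h n
      have h1 : ζ n * (a n / a (n + 1)) ≤ ζ (n + 1) := by linarith
      have := mul_le_mul_of_nonneg_right h1 (ha (n+1)).le
      calc ζ n * a n = ζ n * (a n / a (n+1)) * a (n+1) := by
            rw [mul_assoc, div_mul_cancel₀ _ (ha (n+1)).ne']
        _ ≤ ζ (n+1) * a (n+1) := this
  have hc : 0 < ζ 0 * a 0 := mul_pos (hζ 0) (ha 0)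
  have hle : ∀ n, 1 / ζ n ≤ a n / (ζ 0 * a 0) := by
    intro n
    rw [div_le_div_iff₀ (hζ n) hc]
    calc 1 * (ζ 0 * a 0) = ζ 0 * a 0 := by ring
      _ ≤ ζ n * a n := key n
      _ = a n * ζ n := by ring
  exact Summable.of_nonneg_of_le (fun n => div_nonneg zero_le_one (hζ n).le)
    hle ((hs.div_const _))
end

section
/- A positive series ∑ aₙ converges if and only if there exist a positive sequence ζₙ and c > 0 with ζₙ·(aₙ/aₙ₊₁) − ζₙ₊₁ ≥ c for all n. -/
private lemma tail_shift (a : ℕ → ℝ) (hs : Summable a) (n : ℕ) :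
    (∑' k, a (k + n)) = a n + ∑' k, a (k + (n + 1)) := by
  have h : Summable (fun k => a (k + n)) := (summable_nat_add_iff n).2 hs
  rw [Summable.tsum_eq_zero_add h]
  congr 1
  · norm_num
  · apply tsum_congr; intro k; congr 1; omega

theorem stmt_4 (a : ℕ → ℝ) (ha : ∀ n, 0 < a n) :
    Summable a ↔
      ∃ (ζ : ℕ → ℝ) (c : ℝ), (∀ n, 0 < ζ n) ∧ 0 < c ∧
        ∀ n, ζ n * (a n / a (n + 1)) - ζ (n + 1) ≥ c := by
  constructor
  · intro hs
    refine ⟨fun n => (∑' k, a (k + (n + 1))) / a n, 1, ?_, one_pos, ?_⟩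
    · intro n
      apply div_pos _ (ha n)
      have hsum : Summable (fun k => a (k + (n + 1))) := (summable_nat_add_iff (n+1)).2 hs
      exact Summable.tsum_pos hsum (fun i => (ha _).le) 0 (ha _)
    · intro n
      have hshift := tail_shift a hs (n + 1)
      have h1 : (∑' k, a (k + (n + 1))) / a n * (a n / a (n + 1)) =
          (∑' k, a (k + (n + 1))) / a (n + 1) := by
        rw [div_mul_div_comm, mul_comm (a n), ← div_mul_div_comm, div_self (ha n).ne', mul_one]
      rw [h1, hshift]
      rw [div_sub_div_same, add_sub_cancel_right, div_self (ha (n+1)).ne']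
  · rintro ⟨ζ, c, hζ, hc, h⟩
    have key : ∀ n, c * a (n + 1) ≤ ζ n * a n - ζ (n + 1) * a (n + 1) := by
      intro n
      have h0 := h n
      have han1 : (0:ℝ) < a (n + 1) := ha _
      have h3 := mul_le_mul_of_nonneg_right h0 han1.le
      calc c * a (n + 1) ≤ (ζ n * (a n / a (n + 1)) - ζ (n + 1)) * a (n + 1) := h3
        _ = ζ n * a n - ζ (n + 1) * a (n + 1) := by field_simp
    have hbound : ∀ N, ∑ i ∈ Finset.range N, a (i + 1) ≤ ζ 0 * a 0 / c := by
      intro N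
      have tele : ∑ i ∈ Finset.range N, (ζ i * a i - ζ (i + 1) * a (i + 1)) =
          ζ 0 * a 0 - ζ N * a N := by
        have := Finset.sum_range_sub' (fun i => ζ i * a i) N
        simpa using this
      have h1 : c * ∑ i ∈ Finset.range N, a (i + 1) ≤ ζ 0 * a 0 - ζ N * a N := by
        rw [← tele, Finset.mul_sum]
        exact Finset.sum_le_sum fun i _ => key i
      have h2 : ζ N * a N ≥ 0 := (mul_pos (hζ N) (ha N)).le
      rw [le_div_iff₀ hc]
      nlinarith
    have hs1 : Summable (fun n => a (n + 1)) :=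
      summable_of_sum_range_le (fun n => (ha _).le) hbound
    exact (summable_nat_add_iff 1).1 hs1
end

section
/- A positive series ∑ aₙ diverges if and only if there exists a positive sequence ζₙ with ζₙ·(aₙ/aₙ₊₁) − ζₙ₊₁ ≤ 0 for all n and ∑ 1/ζₙ = ∞. -/
/-
For the forward direction take ζₙ = 1/aₙ, which makes every Tong expression vanish. Conversely,
the condition says exactly that ζₙaₙ is nondecreasing, so 1/ζₙ = aₙ/(ζₙaₙ) ≤ aₙ/(ζ₀a₀), and
summability of ∑ aₙ would force that of ∑ 1/ζₙ.
-/

lemma monotone_mul_of_mul_div_succ_le {a ζ : ℕ → ℝ} (ha : ∀ n, 0 < a n)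
    (h : ∀ n, ζ n * (a n / a (n + 1)) ≤ ζ (n + 1)) : Monotone fun n => ζ n * a n :=
  monotone_nat_of_le_succ fun n => by
    have := mul_le_mul_of_nonneg_right (h n) (ha (n + 1)).le
    rwa [mul_assoc, div_mul_cancel₀ _ (ha (n + 1)).ne'] at this

lemma summable_one_div_of_monotone_mul {a ζ : ℕ → ℝ} (ha : ∀ n, 0 < a n) (hζ : ∀ n, 0 < ζ n)
    (hmono : Monotone fun n => ζ n * a n) (hsa : Summable a) : Summable fun n => 1 / ζ n := by
  have h0 : 0 < ζ 0 * a 0 := mul_pos (hζ 0) (ha 0)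
  refine (hsa.div_const (ζ 0 * a 0)).of_nonneg_of_le (fun n => (one_div_pos.2 (hζ n)).le)
    fun n => ?_
  calc 1 / ζ n = a n / (ζ n * a n) := by rw [div_mul_cancel_right₀ (ha n).ne', one_div]
    _ ≤ a n / (ζ 0 * a 0) := div_le_div_of_nonneg_left (ha n).le h0 (hmono n.zero_le)

theorem stmt_5 (a : ℕ → ℝ) (ha : ∀ n, 0 < a n) :
    ¬ Summable a ↔
      ∃ ζ : ℕ → ℝ, (∀ n, 0 < ζ n) ∧
        (∀ n, ζ n * (a n / a (n + 1)) - ζ (n + 1) ≤ 0) ∧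
        ¬ Summable (fun n => 1 / ζ n) := by
  constructor
  · intro h
    refine ⟨fun n => 1 / a n, fun n => one_div_pos.2 (ha n), fun n => ?_,
      by simpa only [one_div_one_div] using h⟩
    show 1 / a n * (a n / a (n + 1)) - 1 / a (n + 1) ≤ 0
    rw [one_div_mul_eq_div, div_div_cancel_left' (ha n).ne', one_div, sub_self]
  · rintro ⟨ζ, hζ, hle, hns⟩ hsa
    have hmono := monotone_mul_of_mul_div_succ_le ha fun n => sub_nonpos.1 (hle n)
    exact hns (summable_one_div_of_monotone_mul ha hζ hmono hsa)
end

section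
/- If ∑ aₙ diverges with positive terms aₙ, then the sequence ζₙ = (1/aₙ)·∑_{k=0}^{n} a_k satisfies ζₙ·(aₙ/aₙ₊₁) − ζₙ₊₁ = −1 ≤ 0 for all n, and moreover ∑ 1/ζₙ = ∑ aₙ/(∑_{k=0}^{n} a_k) diverges. -/
/-! Writing `S n = ∑ k < n, a k`, every block `∑ N ≤ k < n, a k / S (k + 1)` is at least
`1 - S N / S n`, which tends to `1` as `n → ∞` because `S n → ∞`. So the tails of the series
`∑ a n / S (n + 1)` never drop below `1`, and it diverges (Abel–Dini). -/

open Filter Finset Topology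

theorem partialSum_div_mul_sub_partialSum_div_succ {K : Type*} [Field K] (a : ℕ → K) (n : ℕ)
    (h₀ : a n ≠ 0) (h₁ : a (n + 1) ≠ 0) :
    ((∑ k ∈ range (n + 1), a k) / a n) * (a n / a (n + 1))
      - (∑ k ∈ range (n + 2), a k) / a (n + 1) = -1 := by
  rw [sum_range_succ _ (n + 1)]
  field_simp
  ring

theorem one_sub_div_le_sum_Ico_div_partialSum {b : ℕ → ℝ} (hb : ∀ n, 0 ≤ b n) {N n : ℕ}
    (hNn : N ≤ n) (hn : 0 < ∑ k ∈ range n, b k) :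
    1 - (∑ k ∈ range N, b k) / ∑ k ∈ range n, b k
      ≤ ∑ k ∈ Ico N n, b k / ∑ i ∈ range (k + 1), b i := by
  calc 1 - (∑ k ∈ range N, b k) / ∑ k ∈ range n, b k
      = ∑ k ∈ Ico N n, b k / ∑ i ∈ range n, b i := by
        rw [← sum_div, sum_Ico_eq_sub _ hNn, sub_div, div_self hn.ne']
    _ ≤ ∑ k ∈ Ico N n, b k / ∑ i ∈ range (k + 1), b i := by
        refine sum_le_sum fun k hk => ?_
        rcases (hb k).eq_or_lt with hbk | hbk
        · simp [← hbk]
        · have hle : ∑ i ∈ range (k + 1), b i ≤ ∑ i ∈ range n, b i :=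
            sum_le_sum_of_subset_of_nonneg (range_subset_range.mpr (mem_Ico.mp hk).2)
              fun i _ _ => hb i
          have hpos : 0 < ∑ i ∈ range (k + 1), b i :=
            hbk.trans_le (single_le_sum (fun i _ => hb i) (self_mem_range_succ k))
          exact div_le_div_of_nonneg_left hbk.le hpos hle

theorem not_summable_div_partialSum {b : ℕ → ℝ} (hb : ∀ n, 0 ≤ b n) (hdiv : ¬ Summable b) :
    ¬ Summable fun n => b n / ∑ k ∈ range (n + 1), b k := by
  intro hs
  set S : ℕ → ℝ := fun n => ∑ k ∈ range n, b k
  set P : ℕ → ℝ := fun n => ∑ k ∈ range n, b k / S (k + 1)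
  have hS : Tendsto S atTop atTop := (not_summable_iff_tendsto_nat_atTop_of_nonneg hb).mp hdiv
  have hP : Tendsto P atTop (𝓝 (∑' n, b n / S (n + 1))) := hs.hasSum.tendsto_sum_nat
  have htail : ∀ N, 1 ≤ (∑' n, b n / S (n + 1)) - P N := fun N => by
    refine le_of_tendsto_of_tendsto (f := fun n => 1 - S N / S n) ?_ (hP.sub_const (P N)) ?_
    · simpa using (tendsto_const_nhds (x := S N)).div_atTop hS |>.const_sub 1
    filter_upwards [eventually_ge_atTop N, hS.eventually_gt_atTop 0] with n hNn hn
    rw [← sum_Ico_eq_sub _ hNn]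
    exact one_sub_div_le_sum_Ico_div_partialSum hb hNn hn
  have hzero : Tendsto (fun N => (∑' n, b n / S (n + 1)) - P N) atTop (𝓝 0) := by
    simpa using hP.const_sub (∑' n, b n / S (n + 1))
  linarith [ge_of_tendsto' hzero htail]

theorem stmt_12 (a : ℕ → ℝ) (ha : ∀ n, 0 < a n) (hdiv : ¬ Summable a) :
    (∀ n, ((∑ k ∈ Finset.range (n + 1), a k) / a n) * (a n / a (n + 1))
        - (∑ k ∈ Finset.range (n + 2), a k) / a (n + 1) = -1) ∧
    ¬ Summable (fun n => a n / ∑ k ∈ Finset.range (n + 1), a k) :=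
  ⟨fun n => partialSum_div_mul_sub_partialSum_div_succ a n (ha n).ne' (ha (n + 1)).ne',
    not_summable_div_partialSum (fun n => (ha n).le) hdiv⟩
end

section
/- Let aₙ ≥ 0 and suppose the power series ∑ aₙ xⁿ converges for |x| < 1 and (1−x)·∑ₙ aₙ xⁿ → A as x → 1⁻. Then ∑_{n=0}^{N} aₙ = A·N·(1+o(1)) as N → ∞. -/
/-!
Karamata's proof. For `0 < x < 1` the weights `(1 - x) a n x ^ n` placed at the points `x ^ n`
form a positive measure `μₓ` on `[0, 1]`, and the hypothesis says `∫ t ^ k dμₓ → A / (k + 1)`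
for `k = 0`. Substituting `x ↦ x ^ (k + 1)` gives the same for every `k`, hence
`∫ p dμₓ → A ∫₀¹ p` for every polynomial `p`. By positivity and Weierstrass this extends to the
function `g` equal to `t⁻¹` on `[e⁻¹, 1]` and `0` below, since it can be squeezed between
polynomials with almost equal integrals. At `x = e^{-1/N}` one has `x ^ n g (x ^ n) = 1` exactly
for `n ≤ N`, so `(1 - x) ∑_{n ≤ N} a n → A ∫₀¹ g = A`, while `N (1 - x) → 1`.
-/

open Filter Set Polynomial Topology Real

namespace HardyLittlewood

noncomputable def abelMean (a : ℕ → ℝ) (φ : ℝ → ℝ) (x : ℝ) : ℝ :=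
  (1 - x) * ∑' n, a n * x ^ n * φ (x ^ n)

variable {a : ℕ → ℝ} {A : ℝ}

lemma pow_mem_Icc {x : ℝ} (hx : x ∈ Ioo (0 : ℝ) 1) (n : ℕ) : x ^ n ∈ Icc (0 : ℝ) 1 :=
  ⟨pow_nonneg hx.1.le n, pow_le_one₀ hx.1.le hx.2.le⟩

lemma summable_mul_of_abs_le (ha : ∀ n, 0 ≤ a n)
    (hconv : ∀ x : ℝ, |x| < 1 → Summable (fun n => a n * x ^ n))
    {x : ℝ} (hx : x ∈ Ioo (0 : ℝ) 1) {φ : ℝ → ℝ} {C : ℝ}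
    (hφ : ∀ t ∈ Icc (0 : ℝ) 1, |φ t| ≤ C) :
    Summable (fun n => a n * x ^ n * φ (x ^ n)) := by
  have hx' : |x| < 1 := abs_lt.2 ⟨by linarith [hx.1], hx.2⟩
  refine ((hconv x hx').mul_right C).of_norm_bounded fun n => ?_
  have hweight : 0 ≤ a n * x ^ n := mul_nonneg (ha n) (pow_mem_Icc hx n).1
  rw [Real.norm_eq_abs, abs_mul, abs_of_nonneg hweight]
  exact mul_le_mul_of_nonneg_left (hφ _ (pow_mem_Icc hx n)) hweight

lemma summable_mul_eval (ha : ∀ n, 0 ≤ a n)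
    (hconv : ∀ x : ℝ, |x| < 1 → Summable (fun n => a n * x ^ n))
    {x : ℝ} (hx : x ∈ Ioo (0 : ℝ) 1) (p : ℝ[X]) :
    Summable (fun n => a n * x ^ n * p.eval (x ^ n)) := by
  obtain ⟨C, hC⟩ := isCompact_Icc.exists_bound_of_continuousOn p.continuous.continuousOn
  exact summable_mul_of_abs_le ha hconv hx (C := C) hC

lemma abelMean_add {x : ℝ} {φ ψ : ℝ → ℝ}
    (hφ : Summable (fun n => a n * x ^ n * φ (x ^ n)))
    (hψ : Summable (fun n => a n * x ^ n * ψ (x ^ n))) :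
    abelMean a (fun t => φ t + ψ t) x = abelMean a φ x + abelMean a ψ x := by
  simp only [abelMean, mul_add, hφ.tsum_add hψ]

lemma abelMean_const_mul (c : ℝ) (φ : ℝ → ℝ) (x : ℝ) :
    abelMean a (fun t => c * φ t) x = c * abelMean a φ x := by
  simp only [abelMean, mul_left_comm _ c, tsum_mul_left]

lemma abelMean_mono (ha : ∀ n, 0 ≤ a n) {x : ℝ} (hx : x ∈ Ioo (0 : ℝ) 1) {φ ψ : ℝ → ℝ}
    (hφ : Summable (fun n => a n * x ^ n * φ (x ^ n)))
    (hψ : Summable (fun n => a n * x ^ n * ψ (x ^ n)))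
    (hle : ∀ t ∈ Icc (0 : ℝ) 1, φ t ≤ ψ t) :
    abelMean a φ x ≤ abelMean a ψ x := by
  refine mul_le_mul_of_nonneg_left (hφ.tsum_le_tsum (fun n => ?_) hψ) (by linarith [hx.2])
  exact mul_le_mul_of_nonneg_left (hle _ (pow_mem_Icc hx n))
    (mul_nonneg (ha n) (pow_mem_Icc hx n).1)

lemma nonneg_of_tendsto_abel (ha : ∀ n, 0 ≤ a n)
    (hlim : Tendsto (fun x : ℝ => (1 - x) * ∑' n, a n * x ^ n) (𝓝[<] 1) (𝓝 A)) : 0 ≤ A := by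
  refine ge_of_tendsto hlim ?_
  filter_upwards [Ioo_mem_nhdsLT zero_lt_one] with x hx
  exact mul_nonneg (by linarith [hx.2])
    (tsum_nonneg fun n => mul_nonneg (ha n) (pow_mem_Icc hx n).1)

lemma tendsto_pow_nhdsLT_one (k : ℕ) :
    Tendsto (fun x : ℝ => x ^ (k + 1)) (𝓝[<] 1) (𝓝[<] 1) := by
  refine tendsto_nhdsWithin_iff.2 ⟨?_, ?_⟩
  · simpa using ((continuous_pow (k + 1)).tendsto (1 : ℝ)).mono_left nhdsWithin_le_nhds
  · filter_upwards [Ioo_mem_nhdsLT zero_lt_one] with x hx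
    exact pow_lt_one₀ hx.1.le hx.2 k.succ_ne_zero

/-- Substituting `y = x ^ (k + 1)` turns the `k`-th moment into the Abel mean at `y`,
divided by `1 + x + ⋯ + x ^ k`. -/
lemma tendsto_abelMean_pow
    (hlim : Tendsto (fun x : ℝ => (1 - x) * ∑' n, a n * x ^ n) (𝓝[<] 1) (𝓝 A)) (k : ℕ) :
    Tendsto (abelMean a (· ^ k)) (𝓝[<] 1) (𝓝 (A / (k + 1))) := by
  have hgeom : Tendsto (fun x : ℝ => ∑ i ∈ Finset.range (k + 1), x ^ i) (𝓝[<] 1)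
      (𝓝 ((k : ℝ) + 1)) := by
    have h := (continuous_finsetSum (Finset.range (k + 1)) fun i _ => continuous_pow i).tendsto
      (1 : ℝ)
    simpa using h.mono_left nhdsWithin_le_nhds
  have hsub := hlim.comp (tendsto_pow_nhdsLT_one k)
  rw [div_eq_inv_mul]
  refine ((hgeom.inv₀ (by positivity)).mul hsub).congr' ?_
  filter_upwards [Ioo_mem_nhdsLT zero_lt_one] with x hx
  have hS : 0 < ∑ i ∈ Finset.range (k + 1), x ^ i :=
    Finset.sum_pos (fun i _ => pow_pos hx.1 i) Finset.nonempty_range_add_one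
  have hfac : 1 - x ^ (k + 1) = (1 - x) * ∑ i ∈ Finset.range (k + 1), x ^ i := by
    linarith [geom_sum_mul x (k + 1)]
  simp only [Function.comp_apply, abelMean, hfac, ← pow_mul]
  field_simp
  congr 2 with n
  ring

lemma tendsto_abelMean_eval (ha : ∀ n, 0 ≤ a n)
    (hconv : ∀ x : ℝ, |x| < 1 → Summable (fun n => a n * x ^ n))
    (hlim : Tendsto (fun x : ℝ => (1 - x) * ∑' n, a n * x ^ n) (𝓝[<] 1) (𝓝 A)) (p : ℝ[X]) :
    Tendsto (abelMean a p.eval) (𝓝[<] 1) (𝓝 (A * ∫ t in (0 : ℝ)..1, p.eval t)) := by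
  induction p using Polynomial.induction_on' with
  | add p q hp hq =>
    have hint : ∫ t in (0 : ℝ)..1, (p + q).eval t
        = (∫ t in (0 : ℝ)..1, p.eval t) + ∫ t in (0 : ℝ)..1, q.eval t := by
      simpa only [eval_add] using intervalIntegral.integral_add
        (p.continuous.intervalIntegrable 0 1) (q.continuous.intervalIntegrable 0 1)
    rw [hint, mul_add]
    refine (hp.add hq).congr' ?_
    filter_upwards [Ioo_mem_nhdsLT zero_lt_one] with x hx
    simp only [eval_add]
    exact (abelMean_add (φ := fun t => p.eval t) (ψ := fun t => q.eval t)
      (summable_mul_eval ha hconv hx p) (summable_mul_eval ha hconv hx q)).symm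
  | monomial k c =>
    have hint : ∫ t in (0 : ℝ)..1, (monomial k c).eval t = c / (k + 1) := by
      simp [eval_monomial, integral_pow, div_eq_mul_inv]
    rw [hint]
    convert (tendsto_abelMean_pow hlim k).const_mul c using 2
    · simp only [eval_monomial]
      exact abelMean_const_mul c (· ^ k) _
    · ring

lemma tendsto_abelMean_of_polynomial_sandwich (ha : ∀ n, 0 ≤ a n)
    (hconv : ∀ x : ℝ, |x| < 1 → Summable (fun n => a n * x ^ n))
    (hlim : Tendsto (fun x : ℝ => (1 - x) * ∑' n, a n * x ^ n) (𝓝[<] 1) (𝓝 A))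
    {g : ℝ → ℝ} {C I : ℝ} (hg : ∀ t ∈ Icc (0 : ℝ) 1, |g t| ≤ C)
    (hsandwich : ∀ ε > 0, ∃ p q : ℝ[X],
      (∀ t ∈ Icc (0 : ℝ) 1, p.eval t ≤ g t ∧ g t ≤ q.eval t) ∧
      I - ε ≤ ∫ t in (0 : ℝ)..1, p.eval t ∧ ∫ t in (0 : ℝ)..1, q.eval t ≤ I + ε) :
    Tendsto (abelMean a g) (𝓝[<] 1) (𝓝 (A * I)) := by
  have hA := nonneg_of_tendsto_abel ha hlim
  have hmono : ∀ d > 0, ∃ p q : ℝ[X],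
      A * I - d < A * ∫ t in (0 : ℝ)..1, p.eval t ∧
      A * ∫ t in (0 : ℝ)..1, q.eval t < A * I + d ∧
      ∀ᶠ x in 𝓝[<] 1,
        abelMean a p.eval x ≤ abelMean a g x ∧ abelMean a g x ≤ abelMean a q.eval x := by
    intro d hd
    obtain ⟨ε, hε, hAε⟩ := exists_pos_mul_lt hd A
    obtain ⟨p, q, hpq, hp, hq⟩ := hsandwich ε hε
    refine ⟨p, q, by nlinarith, by nlinarith, ?_⟩
    filter_upwards [Ioo_mem_nhdsLT zero_lt_one] with x hx
    have hgs := summable_mul_of_abs_le ha hconv hx hg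
    exact ⟨abelMean_mono ha hx (summable_mul_eval ha hconv hx p) hgs fun t ht => (hpq t ht).1,
      abelMean_mono ha hx hgs (summable_mul_eval ha hconv hx q) fun t ht => (hpq t ht).2⟩
  rw [tendsto_order]
  constructor
  · intro b hb
    obtain ⟨p, q, hp, -, hsand⟩ := hmono (A * I - b) (by linarith)
    filter_upwards [(tendsto_order.1 (tendsto_abelMean_eval ha hconv hlim p)).1 b (by linarith),
      hsand] with x hbx hx using hbx.trans_le hx.1
  · intro b hb
    obtain ⟨p, q, -, hq, hsand⟩ := hmono (b - A * I) (by linarith)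
    filter_upwards [(tendsto_order.1 (tendsto_abelMean_eval ha hconv hlim q)).2 b (by linarith),
      hsand] with x hbx hx using hx.2.trans_lt hbx

lemma exists_polynomial_ge_integral_le {u : ℝ → ℝ} (hu : ContinuousOn u (Icc 0 1)) {ε : ℝ}
    (hε : 0 < ε) : ∃ q : ℝ[X], (∀ t ∈ Icc (0 : ℝ) 1, u t ≤ q.eval t) ∧
      ∫ t in (0 : ℝ)..1, q.eval t ≤ (∫ t in (0 : ℝ)..1, u t) + ε := by
  obtain ⟨p, hp⟩ := exists_polynomial_near_of_continuousOn 0 1 u hu (ε / 2) (half_pos hε)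
  have hclose : ∀ t ∈ Icc (0 : ℝ) 1, u t ≤ p.eval t + ε / 2 ∧ p.eval t ≤ u t + ε / 2 :=
    fun t ht => by constructor <;> linarith [abs_lt.1 (hp t ht)]
  refine ⟨p + C (ε / 2), fun t ht => by simpa using (hclose t ht).1, ?_⟩
  have hu_int : IntervalIntegrable u MeasureTheory.volume 0 1 :=
    hu.intervalIntegrable_of_Icc zero_le_one
  calc ∫ t in (0 : ℝ)..1, (p + C (ε / 2)).eval t
      = (∫ t in (0 : ℝ)..1, p.eval t) + ε / 2 := by
        simp [intervalIntegral.integral_add (p.continuous.intervalIntegrable 0 1)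
          intervalIntegrable_const]
    _ ≤ (∫ t in (0 : ℝ)..1, (u t + ε / 2)) + ε / 2 := by
        gcongr
        exact intervalIntegral.integral_mono_on zero_le_one (p.continuous.intervalIntegrable 0 1)
          (hu_int.add intervalIntegrable_const) fun t ht => (hclose t ht).2
    _ = (∫ t in (0 : ℝ)..1, u t) + ε := by
        rw [intervalIntegral.integral_add hu_int intervalIntegrable_const]
        simp only [intervalIntegral.integral_const, sub_zero, one_smul]
        ring

lemma exists_polynomial_le_integral_ge {l : ℝ → ℝ} (hl : ContinuousOn l (Icc 0 1)) {ε : ℝ}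
    (hε : 0 < ε) : ∃ p : ℝ[X], (∀ t ∈ Icc (0 : ℝ) 1, p.eval t ≤ l t) ∧
      (∫ t in (0 : ℝ)..1, l t) - ε ≤ ∫ t in (0 : ℝ)..1, p.eval t := by
  obtain ⟨q, hq, hint⟩ := exists_polynomial_ge_integral_le hl.neg hε
  refine ⟨-q, fun t ht => by simpa [neg_le] using hq t ht, ?_⟩
  simp only [Pi.neg_apply, eval_neg, intervalIntegral.integral_neg] at hint ⊢
  linarith

noncomputable def rampIndicator (F : ℝ → ℝ) (b δ t : ℝ) : ℝ :=
  max 0 (min ((t - b) / δ) 1) * F t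

section rampIndicator

variable {F : ℝ → ℝ} {b δ t : ℝ}

lemma continuous_rampIndicator (hF : Continuous F) (b δ : ℝ) :
    Continuous (rampIndicator F b δ) := by
  unfold rampIndicator
  fun_prop

lemma rampIndicator_of_le (hδ : 0 < δ) (ht : t ≤ b) : rampIndicator F b δ t = 0 := by
  have : (t - b) / δ ≤ 0 := div_nonpos_of_nonpos_of_nonneg (by linarith) hδ.le
  simp [rampIndicator, min_eq_left (this.trans zero_le_one), max_eq_left this]

lemma rampIndicator_of_ge (hδ : 0 < δ) (ht : b + δ ≤ t) : rampIndicator F b δ t = F t := by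
  have : 1 ≤ (t - b) / δ := (one_le_div hδ).2 (by linarith)
  simp [rampIndicator, min_eq_right this]

lemma rampIndicator_nonneg (hFt : 0 ≤ F t) : 0 ≤ rampIndicator F b δ t :=
  mul_nonneg (le_max_left _ _) hFt

lemma rampIndicator_le (hFt : 0 ≤ F t) : rampIndicator F b δ t ≤ F t :=
  mul_le_of_le_one_left hFt (max_le zero_le_one (min_le_right _ _))

lemma integral_rampIndicator_mem (hF : Continuous F) (hF0 : ∀ t, 0 ≤ F t) (hb : 0 ≤ b)
    (hδ : 0 < δ) (hbδ : b + δ ≤ 1) :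
    ∫ t in (0 : ℝ)..1, rampIndicator F b δ t ∈
      Icc (∫ t in (b + δ)..1, F t) (∫ t in b..1, F t) := by
  have hint : ∀ u v : ℝ, IntervalIntegrable (rampIndicator F b δ) MeasureTheory.volume u v :=
    fun u v => (continuous_rampIndicator hF b δ).intervalIntegrable u v
  have hzero : ∫ t in (0 : ℝ)..b, rampIndicator F b δ t = 0 := by
    rw [intervalIntegral.integral_congr (g := fun _ => (0 : ℝ))]
    · simp
    · intro t ht
      rw [uIcc_of_le hb] at ht
      exact rampIndicator_of_le hδ ht.2
  have htail : ∫ t in (b + δ)..1, rampIndicator F b δ t = ∫ t in (b + δ)..1, F t := by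
    refine intervalIntegral.integral_congr fun t ht => ?_
    rw [uIcc_of_le hbδ] at ht
    exact rampIndicator_of_ge hδ ht.1
  rw [← intervalIntegral.integral_add_adjacent_intervals (hint 0 b) (hint b 1), hzero, zero_add]
  constructor
  · rw [← intervalIntegral.integral_add_adjacent_intervals (hint b (b + δ)) (hint (b + δ) 1),
      htail, le_add_iff_nonneg_left]
    exact intervalIntegral.integral_nonneg (by linarith) fun t _ => rampIndicator_nonneg (hF0 t)
  · exact intervalIntegral.integral_mono_on (by linarith) (hint b 1) (hF.intervalIntegrable b 1)
      fun t _ => rampIndicator_le (hF0 t)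

lemma rampIndicator_le_indicator (hδ : 0 < δ) (hFt : 0 ≤ F t) :
    rampIndicator F b δ t ≤ (Ici b).indicator F t := by
  by_cases hbt : b ≤ t
  · rw [indicator_of_mem (mem_Ici.2 hbt)]
    exact rampIndicator_le hFt
  · rw [rampIndicator_of_le hδ (not_le.1 hbt).le, indicator_of_notMem (by simpa using hbt)]

lemma indicator_le_rampIndicator (hδ : 0 < δ) (hFt : 0 ≤ F t) :
    (Ici b).indicator F t ≤ rampIndicator F (b - δ) δ t := by
  by_cases hbt : b ≤ t
  · rw [indicator_of_mem (mem_Ici.2 hbt), rampIndicator_of_ge hδ (by linarith)]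
  · rw [indicator_of_notMem (by simpa using hbt)]
    exact rampIndicator_nonneg hFt

end rampIndicator

/-- Smoothing the jump of `indicator (Ici c) F` over an interval of length `δ` from either side
changes the integral by at most `M * δ`. -/
lemma exists_polynomial_sandwich_indicator {F : ℝ → ℝ} {M c ε : ℝ} (hF : Continuous F)
    (hF0 : ∀ t, 0 ≤ F t) (hFM : ∀ t, F t ≤ M) (hc0 : 0 < c) (hc1 : c < 1) (hε : 0 < ε) :
    ∃ p q : ℝ[X], (∀ t ∈ Icc (0 : ℝ) 1,
        p.eval t ≤ (Ici c).indicator F t ∧ (Ici c).indicator F t ≤ q.eval t) ∧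
      (∫ t in c..1, F t) - ε ≤ ∫ t in (0 : ℝ)..1, p.eval t ∧
      ∫ t in (0 : ℝ)..1, q.eval t ≤ (∫ t in c..1, F t) + ε := by
  obtain ⟨δ₀, hδ₀, hMδ₀⟩ := exists_pos_mul_lt (half_pos hε) M
  set δ := min δ₀ (min c (1 - c))
  have hδ : 0 < δ := lt_min hδ₀ (lt_min hc0 (by linarith))
  have hδc : δ ≤ c := (min_le_right _ _).trans (min_le_left _ _)
  have hδ1 : δ ≤ 1 - c := (min_le_right _ _).trans (min_le_right _ _)
  have hMδ : M * δ ≤ ε / 2 :=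
    (mul_le_mul_of_nonneg_left (min_le_left _ _) ((hF0 0).trans (hFM 0))).trans hMδ₀.le
  have hshort : ∀ u, ∫ t in u..u + δ, F t ≤ M * δ := fun u => by
    have h : ‖∫ t in u..u + δ, F t‖ ≤ M * |u + δ - u| :=
      intervalIntegral.norm_integral_le_of_norm_le_const fun t _ => by
        rw [Real.norm_of_nonneg (hF0 t)]; exact hFM t
    rw [add_sub_cancel_left, abs_of_pos hδ, Real.norm_eq_abs] at h
    exact (le_abs_self _).trans h
  have hsplit : ∀ u, ∫ t in u..1, F t = (∫ t in u..u + δ, F t) + ∫ t in (u + δ)..1, F t :=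
    fun u => (intervalIntegral.integral_add_adjacent_intervals
      (hF.intervalIntegrable _ _) (hF.intervalIntegrable _ _)).symm
  obtain ⟨p, hpl, hp⟩ := exists_polynomial_le_integral_ge
    (continuous_rampIndicator hF c δ).continuousOn (half_pos hε)
  obtain ⟨q, hqu, hq⟩ := exists_polynomial_ge_integral_le
    (continuous_rampIndicator hF (c - δ) δ).continuousOn (half_pos hε)
  have hl := (integral_rampIndicator_mem hF hF0 hc0.le hδ (by linarith)).1
  have hu := (integral_rampIndicator_mem hF hF0 (sub_nonneg.2 hδc) hδ (by linarith)).2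
  refine ⟨p, q, fun t ht => ⟨(hpl t ht).trans (rampIndicator_le_indicator hδ (hF0 t)),
    (indicator_le_rampIndicator hδ (hF0 t)).trans (hqu t ht)⟩, ?_, ?_⟩
  · linarith [hsplit c, hshort c]
  · have hleft := hshort (c - δ)
    have hsplit' := hsplit (c - δ)
    rw [sub_add_cancel] at hleft hsplit'
    linarith

/-- `x ^ n * karamataKernel (x ^ n)` is the indicator of `e⁻¹ ≤ x ^ n`; the `max` only makes the
formula continuous below `e⁻¹`. -/
noncomputable def karamataKernel : ℝ → ℝ :=
  (Ici (exp (-1))).indicator fun t => (max t (exp (-1)))⁻¹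

lemma exp_neg_inv_pow (N n : ℕ) (hN : 0 < N) :
    exp (-(N : ℝ)⁻¹) ^ n = exp (-(n / N)) := by
  rw [← exp_nat_mul]
  congr 1
  field_simp

lemma pow_mul_karamataKernel {N : ℕ} (hN : 0 < N) (n : ℕ) :
    exp (-(N : ℝ)⁻¹) ^ n * karamataKernel (exp (-(N : ℝ)⁻¹) ^ n) = if n ≤ N then 1 else 0 := by
  have hmem : exp (-(N : ℝ)⁻¹) ^ n ∈ Ici (exp (-1)) ↔ n ≤ N := by
    rw [mem_Ici, exp_neg_inv_pow N n hN, exp_le_exp, neg_le_neg_iff,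
      div_le_one (Nat.cast_pos.2 hN), Nat.cast_le]
  unfold karamataKernel
  split_ifs with hn
  · rw [indicator_of_mem (hmem.2 hn), max_eq_left (hmem.2 hn), mul_inv_cancel₀ (by positivity)]
  · rw [indicator_of_notMem (mt hmem.1 hn), mul_zero]

lemma tsum_mul_karamataKernel (a : ℕ → ℝ) {N : ℕ} (hN : 0 < N) :
    ∑' n, a n * exp (-(N : ℝ)⁻¹) ^ n * karamataKernel (exp (-(N : ℝ)⁻¹) ^ n)
      = ∑ n ∈ Finset.range (N + 1), a n := by
  simp_rw [mul_assoc, pow_mul_karamataKernel hN]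
  rw [tsum_eq_sum (s := Finset.range (N + 1))]
  · refine Finset.sum_congr rfl fun n hn => ?_
    rw [if_pos (Nat.lt_succ_iff.1 (Finset.mem_range.1 hn)), mul_one]
  · intro n hn
    rw [if_neg (by simpa [Nat.lt_succ_iff] using hn), mul_zero]

lemma tendsto_neg_inv_natCast : Tendsto (fun N : ℕ => -(N : ℝ)⁻¹) atTop (𝓝 0) := by
  simpa using (tendsto_inv_atTop_nhds_zero_nat (𝕜 := ℝ)).neg

lemma tendsto_exp_neg_inv_natCast :
    Tendsto (fun N : ℕ => exp (-(N : ℝ)⁻¹)) atTop (𝓝[<] 1) := by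
  refine tendsto_nhdsWithin_iff.2 ⟨?_, ?_⟩
  · simpa [Function.comp_def] using (continuous_exp.tendsto 0).comp tendsto_neg_inv_natCast
  · filter_upwards [eventually_gt_atTop 0] with N hN
    exact exp_lt_one_iff.2 (neg_lt_zero.2 (by positivity))

/-- `N (1 - e^{-1/N})` is the difference quotient of `exp` at `0` with step `-1/N`. -/
lemma tendsto_natCast_mul_one_sub_exp :
    Tendsto (fun N : ℕ => (N : ℝ) * (1 - exp (-(N : ℝ)⁻¹))) atTop (𝓝 1) := by
  have hslope := (hasDerivAt_exp 0).tendsto_slope_zero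
  rw [exp_zero] at hslope
  have hstep : Tendsto (fun N : ℕ => -(N : ℝ)⁻¹) atTop (𝓝[≠] 0) := by
    refine tendsto_nhdsWithin_iff.2 ⟨tendsto_neg_inv_natCast, ?_⟩
    filter_upwards [eventually_gt_atTop 0] with N hN
    simpa using hN.ne'
  refine (hslope.comp hstep).congr fun N => ?_
  simp only [Function.comp_apply, zero_add, smul_eq_mul, inv_neg, inv_inv]
  ring

lemma tendsto_abelMean_karamataKernel (ha : ∀ n, 0 ≤ a n)
    (hconv : ∀ x : ℝ, |x| < 1 → Summable (fun n => a n * x ^ n))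
    (hlim : Tendsto (fun x : ℝ => (1 - x) * ∑' n, a n * x ^ n) (𝓝[<] 1) (𝓝 A)) :
    Tendsto (abelMean a karamataKernel) (𝓝[<] 1) (𝓝 A) := by
  set F : ℝ → ℝ := fun t => (max t (exp (-1)))⁻¹
  have hmax_pos : ∀ t, 0 < max t (exp (-1)) := fun t => (exp_pos _).trans_le (le_max_right _ _)
  have hF : Continuous F := (continuous_id.max continuous_const).inv₀ fun t => (hmax_pos t).ne'
  have hF0 : ∀ t, 0 ≤ F t := fun t => (inv_pos.2 (hmax_pos t)).le
  have hFM : ∀ t, F t ≤ exp 1 := fun t => by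
    simpa [F, ← exp_neg] using inv_anti₀ (exp_pos (-1)) (le_max_right t (exp (-1)))
  have hint : ∫ t in exp (-1)..1, F t = 1 := by
    rw [intervalIntegral.integral_congr (g := fun t => t⁻¹)]
    · rw [integral_inv_of_pos (exp_pos _) one_pos, one_div, ← exp_neg, neg_neg, log_exp]
    · intro t ht
      rw [uIcc_of_le (exp_le_one_iff.2 (by norm_num))] at ht
      simp only [F, max_eq_left ht.1]
  have hbound : ∀ t ∈ Icc (0 : ℝ) 1, |karamataKernel t| ≤ exp 1 := fun t _ => by
    have h0 : 0 ≤ karamataKernel t := indicator_nonneg (fun t _ => hF0 t) t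
    rw [abs_of_nonneg h0]
    exact (indicator_le_self' (fun t _ => hF0 t) t).trans (hFM t)
  convert tendsto_abelMean_of_polynomial_sandwich ha hconv hlim hbound fun ε hε =>
    exists_polynomial_sandwich_indicator hF hF0 hFM (exp_pos (-1))
      (exp_lt_one_iff.2 (by norm_num)) hε
  rw [hint, mul_one]

lemma tendsto_sum_range_div_natCast (ha : ∀ n, 0 ≤ a n)
    (hconv : ∀ x : ℝ, |x| < 1 → Summable (fun n => a n * x ^ n))
    (hlim : Tendsto (fun x : ℝ => (1 - x) * ∑' n, a n * x ^ n) (𝓝[<] 1) (𝓝 A)) :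
    Tendsto (fun N : ℕ => (∑ n ∈ Finset.range (N + 1), a n) / N) atTop (𝓝 A) := by
  have hmean := (tendsto_abelMean_karamataKernel ha hconv hlim).comp tendsto_exp_neg_inv_natCast
  have hquot := hmean.div tendsto_natCast_mul_one_sub_exp one_ne_zero
  rw [div_one] at hquot
  refine hquot.congr' ?_
  filter_upwards [eventually_gt_atTop 0] with N hN
  have hx : 1 - exp (-(N : ℝ)⁻¹) ≠ 0 :=
    (sub_pos.2 (exp_lt_one_iff.2 (neg_lt_zero.2 (by positivity)))).ne'
  simp only [Pi.div_apply, Function.comp_apply, abelMean, tsum_mul_karamataKernel a hN]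
  rw [mul_comm (N : ℝ), ← div_div, mul_div_cancel_left₀ _ hx]

end HardyLittlewood

theorem stmt_14 (a : ℕ → ℝ) (ha : ∀ n, 0 ≤ a n) (A : ℝ)
    (hconv : ∀ x : ℝ, |x| < 1 → Summable (fun n => a n * x ^ n))
    (hlim : Filter.Tendsto (fun x : ℝ => (1 - x) * ∑' n, a n * x ^ n)
      (nhdsWithin 1 (Set.Iio 1)) (nhds A)) :
    (fun N : ℕ => (∑ n ∈ Finset.range (N + 1), a n) - A * N)
      =o[Filter.atTop] (fun N : ℕ => (N : ℝ)) := by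
  rw [Asymptotics.isLittleO_iff_tendsto'
    ((eventually_ne_atTop 0).mono fun N hN h0 => absurd (Nat.cast_eq_zero.1 h0) hN)]
  have h := (HardyLittlewood.tendsto_sum_range_div_natCast ha hconv hlim).sub_const A
  rw [sub_self] at h
  refine h.congr' ?_
  filter_upwards [eventually_gt_atTop 0] with N hN
  field_simp
end

section
/- If (aₙ) is a nonnegative sequence and lim_{x→1⁻} ∑ aₙ xⁿ exists and is finite (with the power series convergent on (−1,1)), then ∑ aₙ converges (to that limit). -/
theorem stmt_17 (a : ℕ → ℝ) (ha : ∀ n, 0 ≤ a n) (A : ℝ)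
    (hconv : ∀ x : ℝ, -1 < x → x < 1 → Summable (fun n => a n * x ^ n))
    (hlim : Filter.Tendsto (fun x : ℝ => ∑' n, a n * x ^ n)
      (nhdsWithin 1 (Set.Iio 1)) (nhds A)) :
    HasSum a A := by
  -- f(x) ≤ A for x ∈ [0,1)
  have hfleA : ∀ x : ℝ, 0 ≤ x → x < 1 → (∑' n, a n * x ^ n) ≤ A := by
    intro x hx0 hx1
    refine ge_of_tendsto hlim ?_
    filter_upwards [Ioo_mem_nhdsLT_of_mem (Set.mem_Ioc.2 ⟨hx1, le_refl 1⟩)] with y hy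
    refine Summable.tsum_le_tsum (fun n => ?_)
      (hconv x (by linarith) hx1) (hconv y (by linarith [hy.1]) hy.2)
    exact mul_le_mul_of_nonneg_left
      (pow_le_pow_left₀ hx0 hy.1.le n) (ha n)
  -- partial sums bounded by A
  have hbound : ∀ N, ∑ i ∈ Finset.range N, a i ≤ A := by
    intro N
    have hcont : Filter.Tendsto (fun x : ℝ => ∑ i ∈ Finset.range N, a i * x ^ i)
        (nhdsWithin 1 (Set.Iio 1)) (nhds (∑ i ∈ Finset.range N, a i * 1 ^ i)) := by
      exact ((continuous_finset_sum _ (fun i _ => by continuity)).tendsto 1).mono_left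
        nhdsWithin_le_nhds
    simp only [one_pow, mul_one] at hcont
    refine le_of_tendsto hcont ?_
    filter_upwards [Ioo_mem_nhdsLT_of_mem (Set.mem_Ioc.2 ⟨(by norm_num : (0:ℝ) < 1), le_refl 1⟩)]
      with y hy
    calc ∑ i ∈ Finset.range N, a i * y ^ i
        ≤ ∑' n, a n * y ^ n := by
          refine Summable.sum_le_tsum _ (fun n _ => mul_nonneg (ha n) (pow_nonneg hy.1.le n))
            (hconv y (by linarith [hy.1]) hy.2)
      _ ≤ A := hfleA y hy.1.le hy.2
  have hsum : Summable a := summable_of_sum_range_le ha hbound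
  have hSleA : ∑' n, a n ≤ A := Summable.tsum_le_of_sum_range_le hsum hbound
  have hAleS : A ≤ ∑' n, a n := by
    refine le_of_tendsto hlim ?_
    filter_upwards [Ioo_mem_nhdsLT_of_mem (Set.mem_Ioc.2 ⟨(by norm_num : (0:ℝ) < 1), le_refl 1⟩)]
      with y hy
    refine Summable.tsum_le_tsum (fun n => ?_) (hconv y (by linarith [hy.1]) hy.2) hsum
    calc a n * y ^ n ≤ a n * 1 := by
          exact mul_le_mul_of_nonneg_left (pow_le_one₀ hy.1.le hy.2.le) (ha n)
      _ = a n := mul_one _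
  have : ∑' n, a n = A := le_antisymm hSleA hAleS
  exact this ▸ hsum.hasSum
end
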